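/- arXiv:2312.12179 — 3 statements merged into one kernel-verified Lean document; each statement's English description precedes it below -/
import Mathlib

section
/- Let c > 0, let μ ∈ S₁ satisfy F_c(μ) = μ, let R be its probability generating function, and let g(x) = -log(1 - R(x)) for x ∈ [0,1). Then: g(0) = 0; 0 < g(x) < ∞ for all x ∈ (0,1); lim_{x→1⁻} g(x) = ∞; g''(x) = (g'(x))² + (2c/(x(1-x)))(1 - e^{-g(x)}) for all x ∈ (0,1); lim_{x→1⁻} g'(x) = ∞; lim_{x→1⁻} g''(x) = ∞; and g'(x) ≤ 1/(1-x) for all x ∈ [0,1). -/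
open Filter Topology Set

noncomputable section

/-- Convolution of two (sub)probability mass functions on `ℕ∞ = ℕ⁺ ∪ {∞} ∪ {0}`,
with the convention `∞ + anything = ∞`. -/
def conv (μ ν : ℕ∞ → ℝ) : ℕ∞ → ℝ :=
  fun k => ∑' p : ℕ∞ × ℕ∞, if p.1 + p.2 = k then μ p.1 * ν p.2 else 0

/-- The factor `(l(l-1)/2) / (l(l-1)/2 + c)`, the probability that the coalescence
from `l` to `l-1` lineages happens before an independent `Exp(c)` time. -/
def kingmanFactor (c : ℝ) (l : ℕ) : ℝ :=
  ((l : ℝ) * ((l : ℝ) - 1) / 2) / ((l : ℝ) * ((l : ℝ) - 1) / 2 + c)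

/-- `pK c j i` : the probability that Kingman's coalescent started from `j` lineages
has exactly `i` lineages at an independent exponential time with rate `c`. -/
def pK (c : ℝ) (j : ℕ∞) (i : ℕ) : ℝ :=
  (c / ((i : ℝ) * ((i : ℝ) - 1) / 2 + c)) *
    (if j = ⊤ then ∏' l : ℕ, kingmanFactor c (i + 1 + l)
     else ∏ l ∈ Finset.Icc (i + 1) j.toNat, kingmanFactor c l)

/-- The mass that `F_c μ` puts on a finite `k ∈ ℕ⁺`. -/
def FcFin (c : ℝ) (μ : ℕ∞ → ℝ) (k : ℕ) : ℝ :=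
  ∑' j : ℕ∞, if (k : ℕ∞) ≤ j then conv μ μ j * pK c j k else 0

/-- The map `F_c` on distributions on `ℕ⁺ ∪ {∞}`; the mass at `∞` is the remaining mass. -/
def Fc (c : ℝ) (μ : ℕ∞ → ℝ) : ℕ∞ → ℝ :=
  fun k =>
    if k = ⊤ then 1 - ∑' n : ℕ, FcFin c μ n
    else if k = 0 then 0 else FcFin c μ k.toNat

/-- `μ` is a probability distribution on `ℕ⁺ ∪ {∞}` (no mass at `0`). -/
def IsDist (μ : ℕ∞ → ℝ) : Prop :=
  (∀ k, 0 ≤ μ k) ∧ μ 0 = 0 ∧ HasSum μ 1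

/-- The mean of a distribution on `ℕ⁺ ∪ {∞}` (ignoring the mass at `∞`). -/
def distMean (μ : ℕ∞ → ℝ) : ℝ := ∑' n : ℕ, (n : ℝ) * μ (n : ℕ∞)

/-- `μ` belongs to `S₁`: a probability distribution on `ℕ⁺` with finite mean. -/
def MemS1 (μ : ℕ∞ → ℝ) : Prop :=
  IsDist μ ∧ μ ⊤ = 0 ∧ Summable (fun n : ℕ => (n : ℝ) * μ (n : ℕ∞))

/-- `StDom μ ν` : `μ ⪯ ν` in the usual stochastic order, i.e.
`μ([0,x]) ≥ ν([0,x])` for all `x ∈ [0,∞]`. -/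
def StDom (μ ν : ℕ∞ → ℝ) : Prop :=
  ∀ x : ℕ∞, (∑' k : ℕ∞, if k ≤ x then ν k else 0) ≤ ∑' k : ℕ∞, if k ≤ x then μ k else 0

/-- The unit point mass at `a`. -/
def delta (a : ℕ∞) : ℕ∞ → ℝ := fun k => if k = a then 1 else 0

end

/-!
Write `aₙ = μ {n}`, `λₖ = k(k-1)/2` and `R = ∑ aₙ xⁿ`. The Kingman transition probabilities
telescope: `(λₖ + c) p(j,k) = λₖ₊₁ p(j,k+1)` for `k < j` and `(λₖ + c) p(k,k) = c`, so the
fixed-point equation becomes the recursion `(λₖ + c) aₖ = c (a ∗ a)ₖ + λₖ₊₁ aₖ₊₁`. Read as an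
identity between coefficients of `xᵏ`, this is the ODE `x(1-x) R'' = 2c R(1-R)` on `(-1, 1)`.
For `g = -log(1-R)` one has `g' = R'/(1-R)` and `g'' = g'² + R''/(1-R)`, which with
`e^{-g} = 1 - R` is the ODE for `g`. Abel's theorem gives `R → 1` at `1⁻`, hence `g → ∞`,
`g' ≥ δ/(1-R) → ∞` and `g'' ≥ g'² → ∞`. The bound `g' ≤ 1/(1-x)` is the termwise inequality
`(n+1) xⁿ (1-x) ≤ 1 - xⁿ⁺¹`.
-/

noncomputable def kingmanRate (n : ℕ) : ℝ := (n : ℝ) * ((n : ℝ) - 1) / 2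

lemma kingmanRate_nonneg (n : ℕ) : 0 ≤ kingmanRate n := by
  rcases n with _ | n
  · simp [kingmanRate]
  · unfold kingmanRate
    push_cast
    rw [add_sub_cancel_right]
    positivity

lemma kingmanRate_succ (n : ℕ) : kingmanRate (n + 1) = ((n : ℝ) + 1) * n / 2 := by
  unfold kingmanRate
  push_cast
  ring

section KingmanTransition

open Finset

variable {c : ℝ}

lemma kingmanFactor_nonneg (hc : 0 ≤ c) (l : ℕ) : 0 ≤ kingmanFactor c l :=
  div_nonneg (kingmanRate_nonneg l) (add_nonneg (kingmanRate_nonneg l) hc)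

lemma kingmanFactor_le_one (hc : 0 ≤ c) (l : ℕ) : kingmanFactor c l ≤ 1 :=
  div_le_one_of_le₀ (le_add_of_nonneg_right hc) (add_nonneg (kingmanRate_nonneg l) hc)

lemma pK_natCast (j k : ℕ) :
    pK c j k = c / (kingmanRate k + c) * ∏ l ∈ Icc (k + 1) j, kingmanFactor c l := by
  rw [pK, if_neg (ENat.natCast_ne_top j), ENat.toNat_natCast]
  rfl

lemma pK_natCast_nonneg (hc : 0 ≤ c) (j k : ℕ) : 0 ≤ pK c j k := by
  rw [pK_natCast]
  exact mul_nonneg (div_nonneg hc (add_nonneg (kingmanRate_nonneg k) hc))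
    (prod_nonneg fun l _ => kingmanFactor_nonneg hc l)

lemma pK_natCast_le_one (hc : 0 ≤ c) (j k : ℕ) : pK c j k ≤ 1 := by
  rw [pK_natCast]
  exact mul_le_one₀ (div_le_one_of_le₀ (le_add_of_nonneg_left (kingmanRate_nonneg k))
      (add_nonneg (kingmanRate_nonneg k) hc))
    (prod_nonneg fun l _ => kingmanFactor_nonneg hc l)
    (prod_le_one (fun l _ => kingmanFactor_nonneg hc l) fun l _ => kingmanFactor_le_one hc l)

lemma pK_self (k : ℕ) : pK c k k = c / (kingmanRate k + c) := by
  rw [pK_natCast, Finset.Icc_eq_empty (by omega), Finset.prod_empty, mul_one]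

lemma kingmanRate_add_mul_pK (hc : 0 < c) {j k : ℕ} (hkj : k < j) :
    (kingmanRate k + c) * pK c j k = kingmanRate (k + 1) * pK c j (k + 1) := by
  have hk := (add_pos_of_nonneg_of_pos (kingmanRate_nonneg k) hc).ne'
  have hk1 := (add_pos_of_nonneg_of_pos (kingmanRate_nonneg (k + 1)) hc).ne'
  rw [pK_natCast, pK_natCast, ← Finset.insert_Icc_add_one_left_eq_Icc (by omega : k + 1 ≤ j),
    prod_insert (by simp), show kingmanFactor c (k + 1) =
      kingmanRate (k + 1) / (kingmanRate (k + 1) + c) from rfl]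
  field_simp

end KingmanTransition

open Finset in
noncomputable def cauchyProd (a b : ℕ → ℝ) (n : ℕ) : ℝ := ∑ p ∈ antidiagonal n, a p.1 * b p.2

open Finset in
lemma conv_natCast (μ ν : ℕ∞ → ℝ) (n : ℕ) :
    conv μ ν n = cauchyProd (fun k => μ k) (fun k => ν k) n := by
  have hinj : Function.Injective (fun p : ℕ × ℕ => ((p.1 : ℕ∞), (p.2 : ℕ∞))) :=
    fun p q h => Prod.ext (by simpa using congrArg Prod.fst h) (by simpa using congrArg Prod.snd h)
  rw [conv, ← hinj.tsum_eq, tsum_eq_sum (s := antidiagonal n)]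
  · refine Finset.sum_congr rfl fun p hp => ?_
    rw [if_pos (by rw [← Nat.cast_add, Finset.HasAntidiagonal.mem_antidiagonal.mp hp])]
  · intro p hp
    rw [Finset.HasAntidiagonal.mem_antidiagonal] at hp
    rw [if_neg (by dsimp only; exact_mod_cast hp)]
  · rintro ⟨q₁, q₂⟩ hq
    have hsum : q₁ + q₂ = n := by by_contra h; exact hq (by simp [h])
    lift q₁ to ℕ using fun h => by simp [h] at hsum
    lift q₂ to ℕ using fun h => by simp [h] at hsum
    exact ⟨(q₁, q₂), rfl⟩

lemma conv_top {μ ν : ℕ∞ → ℝ} (hμ : μ ⊤ = 0) (hν : ν ⊤ = 0) : conv μ ν ⊤ = 0 := by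
  refine (tsum_congr fun p => ?_).trans tsum_zero
  split_ifs with h
  · rcases ENat.add_eq_top.mp h with h | h <;> simp [h, hμ, hν]
  · rfl

section FixedPoint

variable {c : ℝ} {μ : ℕ∞ → ℝ}

lemma MemS1.hasSum_natCast (hμ : MemS1 μ) : HasSum (fun n : ℕ => μ n) 1 := by
  refine (Nat.cast_injective.hasSum_iff fun j hj => ?_).mpr hμ.1.2.2
  induction j using ENat.recTopCoe with
  | top => exact hμ.2.1
  | coe n => exact absurd ⟨n, rfl⟩ hj

lemma MemS1.summable_cauchyProd (hμ : MemS1 μ) :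
    Summable (cauchyProd (fun n => μ n) (fun n => μ n)) :=
  summable_sum_mul_antidiagonal_of_summable_mul (f := fun n : ℕ => μ n) (g := fun n : ℕ => μ n) <|
    hμ.hasSum_natCast.summable.mul_of_nonneg hμ.hasSum_natCast.summable
      (fun _ => hμ.1.1 _) (fun _ => hμ.1.1 _)

lemma FcFin_eq_tsum (hμ : μ ⊤ = 0) (k : ℕ) :
    FcFin c μ k = ∑' j : ℕ,
      if k ≤ j then cauchyProd (fun n => μ n) (fun n => μ n) j * pK c j k else 0 := by
  rw [FcFin, ← Nat.cast_injective.tsum_eq]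
  · simp only [Nat.cast_le, conv_natCast]
  · intro j hj
    induction j using ENat.recTopCoe with
    | top => simp [conv_top hμ hμ] at hj
    | coe n => exact ⟨n, rfl⟩

lemma eq_FcFin_of_Fc_eq (hfix : Fc c μ = μ) {k : ℕ} (hk : k ≠ 0) : μ k = FcFin c μ k := by
  conv_lhs => rw [← hfix]
  rw [Fc, if_neg (ENat.natCast_ne_top k), if_neg (by exact_mod_cast hk),
    ENat.toNat_natCast]

lemma kingmanRate_add_mul_of_Fc_eq (hc : 0 < c) (hμ : MemS1 μ) (hfix : Fc c μ = μ) {k : ℕ}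
    (hk : k ≠ 0) :
    (kingmanRate k + c) * μ k = c * cauchyProd (fun n => μ n) (fun n => μ n) k
      + kingmanRate (k + 1) * μ ↑(k + 1) := by
  set P := cauchyProd (fun n => μ n) (fun n => μ n)
  have hterm (j : ℕ) :
      (kingmanRate k + c) * (if k ≤ j then P j * pK c j k else 0)
        = (if j = k then c * P k else 0)
          + kingmanRate (k + 1) * (if k + 1 ≤ j then P j * pK c j (k + 1) else 0) := by
    rcases lt_trichotomy j k with h | rfl | h
    · simp [h.not_ge, h.ne, show ¬ k + 1 ≤ j by omega]
    · have := (add_pos_of_nonneg_of_pos (kingmanRate_nonneg j) hc).ne'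
      simp only [le_refl, if_true, show ¬ j + 1 ≤ j by omega, if_false, pK_self]
      field_simp
      ring
    · simp only [h.le, h.ne', show k + 1 ≤ j by omega, if_true, if_false, zero_add]
      rw [mul_left_comm, kingmanRate_add_mul_pK hc h]
      ring
  have hsummable : Summable fun j : ℕ => if k + 1 ≤ j then P j * pK c j (k + 1) else 0 := by
    have hP (j : ℕ) : 0 ≤ P j := Finset.sum_nonneg fun _ _ => mul_nonneg (hμ.1.1 _) (hμ.1.1 _)
    refine hμ.summable_cauchyProd.of_nonneg_of_le (fun j => ?_) (fun j => ?_) <;> split_ifs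
    · exact mul_nonneg (hP j) (pK_natCast_nonneg hc.le _ _)
    · exact le_rfl
    · exact mul_le_of_le_one_right (hP j) (pK_natCast_le_one hc.le _ _)
    · exact hP j
  rw [eq_FcFin_of_Fc_eq hfix hk, eq_FcFin_of_Fc_eq hfix (by omega), FcFin_eq_tsum hμ.2.1,
    FcFin_eq_tsum hμ.2.1, ← tsum_mul_left, tsum_congr hterm,
    Summable.tsum_add (hasSum_ite_eq k _).summable (hsummable.mul_left _), tsum_ite_eq,
    tsum_mul_left]

lemma coeff_identity_of_Fc_eq (hc : 0 < c) (hμ : MemS1 μ) (hfix : Fc c μ = μ) (k : ℕ) :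
    (k : ℝ) * (k + 1) * μ ↑(k + 1) - ((k : ℝ) - 1) * k * μ k
      = 2 * c * (μ k - cauchyProd (fun n => μ n) (fun n => μ n) k) := by
  rcases eq_or_ne k 0 with rfl | hk
  · simp [cauchyProd, hμ.1.2.1]
  · have hrec := kingmanRate_add_mul_of_Fc_eq hc hμ hfix hk
    rw [kingmanRate_succ, kingmanRate] at hrec
    linear_combination (-2) * hrec

end FixedPoint

section PowerSeries

noncomputable def powSeries (a : ℕ → ℝ) (x : ℝ) : ℝ := ∑' n, a n * x ^ n

noncomputable def derivCoeff (a : ℕ → ℝ) (n : ℕ) : ℝ := (n + 1) * a (n + 1)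

def OneLeRadius (a : ℕ → ℝ) : Prop :=
  ∀ r : ℝ, 0 ≤ r → r < 1 → Summable fun n => |a n| * r ^ n

variable {a b : ℕ → ℝ} {x : ℝ}

lemma powSeries_zero (a : ℕ → ℝ) : powSeries a 0 = a 0 := by
  rw [powSeries, tsum_eq_single 0 fun n hn => by simp [hn]]
  simp

lemma OneLeRadius.summable_norm (ha : OneLeRadius a) (hx : |x| < 1) :
    Summable fun n => ‖a n * x ^ n‖ :=
  (ha |x| (abs_nonneg x) hx).congr fun n => by rw [Real.norm_eq_abs, abs_mul, abs_pow]

lemma OneLeRadius.hasSum (ha : OneLeRadius a) (hx : |x| < 1) :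
    HasSum (fun n => a n * x ^ n) (powSeries a x) :=
  (ha.summable_norm hx).of_norm.hasSum

lemma oneLeRadius_derivCoeff (ha : OneLeRadius a) : OneLeRadius (derivCoeff a) := by
  intro r hr0 hr1
  obtain ⟨s, hrs, hs1⟩ := exists_between hr1
  have hs0 : 0 < s := hr0.trans_lt hrs
  have hq : ‖r / s‖ < 1 := by
    rw [Real.norm_of_nonneg (by positivity), div_lt_one hs0]
    linarith
  set C := ∑' n, |a n| * s ^ n
  have hC (n : ℕ) : |a n| * s ^ n ≤ C :=
    (ha s hs0.le hs1).le_tsum n fun _ _ => by positivity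
  have hsum : Summable fun n : ℕ => C / s * ((n : ℝ) ^ 1 * (r / s) ^ n + (r / s) ^ n) :=
    ((summable_pow_mul_geometric_of_norm_lt_one 1 hq).add
      (summable_geometric_of_norm_lt_one hq)).mul_left _
  refine hsum.of_nonneg_of_le (fun n => by positivity) fun n => ?_
  calc |derivCoeff a n| * r ^ n
      = ((n : ℝ) + 1) * (|a (n + 1)| * s ^ (n + 1)) * (r / s) ^ n / s := by
        rw [derivCoeff, abs_mul, abs_of_nonneg (by positivity : (0 : ℝ) ≤ n + 1), div_pow, pow_succ]
        field_simp
    _ ≤ ((n : ℝ) + 1) * C * (r / s) ^ n / s := by gcongr; exact hC _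
    _ = C / s * ((n : ℝ) ^ 1 * (r / s) ^ n + (r / s) ^ n) := by ring

lemma hasDerivAt_powSeries (ha : OneLeRadius a) (hx : |x| < 1) :
    HasDerivAt (powSeries a) (powSeries (derivCoeff a) x) x := by
  obtain ⟨r, hxr, hr1⟩ := exists_between hx
  have hr0 : 0 < r := (abs_nonneg x).trans_lt hxr
  replace hxr : x ∈ Ioo (-r) r := abs_lt.mp hxr
  have hu : Summable fun n : ℕ => |a n| * n * r ^ (n - 1) := by
    rw [← summable_nat_add_iff 1]
    refine (oneLeRadius_derivCoeff ha r hr0.le hr1).congr fun n => ?_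
    rw [derivCoeff, abs_mul, abs_of_nonneg (by positivity : (0 : ℝ) ≤ n + 1)]
    push_cast
    ring
  have hbound (n : ℕ) (y : ℝ) (hy : y ∈ Ioo (-r) r) :
      ‖a n * (n * y ^ (n - 1))‖ ≤ |a n| * n * r ^ (n - 1) := by
    rw [Real.norm_eq_abs, abs_mul, abs_mul, abs_pow, Nat.abs_cast, ← mul_assoc]
    gcongr
    exact abs_le.mpr ⟨hy.1.le, hy.2.le⟩
  have hderiv := hasDerivAt_tsum_of_isPreconnected hu isOpen_Ioo isPreconnected_Ioo
    (g := fun n y => a n * y ^ n) (g' := fun n y => a n * (n * y ^ (n - 1)))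
    (fun n y _ => (hasDerivAt_pow n y).const_mul (a n)) hbound
    (⟨neg_neg_of_pos hr0, hr0⟩ : (0 : ℝ) ∈ Ioo (-r) r)
    ((ha.hasSum (by norm_num : |(0 : ℝ)| < 1)).summable) hxr
  refine hderiv.congr_deriv ?_
  rw [(hu.of_norm_bounded (hbound · x hxr)).tsum_eq_zero_add, powSeries]
  simp only [derivCoeff, Nat.cast_add, Nat.cast_one, CharP.cast_eq_zero, zero_mul, mul_zero,
    zero_add, add_tsub_cancel_right]
  exact tsum_congr fun n => by ring

open Finset in
lemma hasSum_cauchyProd_mul_pow (ha : OneLeRadius a) (hb : OneLeRadius b) (hx : |x| < 1) :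
    HasSum (fun n => cauchyProd a b n * x ^ n) (powSeries a x * powSeries b x) := by
  have hterm (n : ℕ) : ∑ p ∈ antidiagonal n, a p.1 * x ^ p.1 * (b p.2 * x ^ p.2)
      = cauchyProd a b n * x ^ n := by
    rw [cauchyProd, Finset.sum_mul]
    refine Finset.sum_congr rfl fun p hp => ?_
    rw [← Finset.HasAntidiagonal.mem_antidiagonal.mp hp, pow_add]
    ring
  have hf := ha.summable_norm hx
  have hg := hb.summable_norm hx
  have hsum := (summable_norm_sum_mul_antidiagonal_of_summable_norm hf hg).of_norm
  simp only [hterm] at hsum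
  rw [powSeries, powSeries, tsum_mul_tsum_eq_tsum_sum_antidiagonal_of_summable_norm hf hg]
  simp only [hterm]
  exact hsum.hasSum

lemma powSeries_ode_of_coeff_identity {c : ℝ} (ha : OneLeRadius a)
    (hcoef : ∀ k : ℕ, (k : ℝ) * (k + 1) * a (k + 1) - ((k : ℝ) - 1) * k * a k
      = 2 * c * (a k - cauchyProd a a k)) (hx : |x| < 1) :
    x * (1 - x) * powSeries (derivCoeff (derivCoeff a)) x
      = 2 * c * powSeries a x * (1 - powSeries a x) := by
  have h2 := (oneLeRadius_derivCoeff (oneLeRadius_derivCoeff ha)).hasSum hx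
  have hx1 : HasSum (fun k : ℕ => (k : ℝ) * (k + 1) * a (k + 1) * x ^ k)
      (x * powSeries (derivCoeff (derivCoeff a)) x) := by
    refine (hasSum_nat_add_iff' 1).mp ?_
    simp only [Finset.sum_range_one, Nat.cast_zero, zero_mul, sub_zero]
    refine (h2.mul_left x).congr_fun fun n => ?_
    simp only [derivCoeff]
    push_cast
    ring
  have hx2 : HasSum (fun k : ℕ => ((k : ℝ) - 1) * k * a k * x ^ k)
      (x ^ 2 * powSeries (derivCoeff (derivCoeff a)) x) := by
    refine (hasSum_nat_add_iff' 2).mp ?_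
    simp only [Finset.sum_range_succ, Finset.sum_range_zero, Nat.cast_zero, Nat.cast_one,
      zero_mul, mul_zero, sub_self, zero_add, sub_zero]
    refine (h2.mul_left (x ^ 2)).congr_fun fun n => ?_
    simp only [derivCoeff]
    push_cast
    ring
  have hrhs := ((ha.hasSum hx).sub (hasSum_cauchyProd_mul_pow ha ha hx)).mul_left (2 * c)
  have hlhs : HasSum (fun k => 2 * c * (a k * x ^ k - cauchyProd a a k * x ^ k))
      (x * powSeries (derivCoeff (derivCoeff a)) x
        - x ^ 2 * powSeries (derivCoeff (derivCoeff a)) x) :=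
    (hx1.sub hx2).congr_fun fun k => by linear_combination (-x ^ k) * hcoef k
  linear_combination hlhs.unique hrhs

end PowerSeries

lemma succ_mul_pow_mul_one_sub_le {x : ℝ} (hx0 : 0 ≤ x) (hx1 : x ≤ 1) (n : ℕ) :
    (n + 1) * x ^ n * (1 - x) ≤ 1 - x ^ (n + 1) := by
  have hsum : (n + 1 : ℕ) • x ^ n ≤ ∑ i ∈ Finset.range (n + 1), x ^ i := by
    simpa using Finset.card_nsmul_le_sum (Finset.range (n + 1)) (x ^ ·) (x ^ n)
      fun i hi => pow_le_pow_of_le_one hx0 hx1 (Finset.mem_range_succ_iff.mp hi)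
  rw [nsmul_eq_mul, Nat.cast_succ] at hsum
  nlinarith [geom_sum_mul x (n + 1), mul_le_mul_of_nonneg_right hsum (sub_nonneg.mpr hx1)]

section ProbabilitySequence

variable {a : ℕ → ℝ} {x : ℝ}

lemma oneLeRadius_of_nonneg_of_summable (ha : ∀ n, 0 ≤ a n) (hs : Summable a) :
    OneLeRadius a := fun r hr0 hr1 =>
  hs.of_nonneg_of_le (fun n => by positivity) fun n => by
    rw [abs_of_nonneg (ha n)]
    exact mul_le_of_le_one_right (ha n) (pow_le_one₀ hr0 hr1.le)

lemma tendsto_powSeries_nhdsLT_one {l : ℝ} (ha : HasSum a l) :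
    Tendsto (powSeries a) (𝓝[<] 1) (𝓝 l) :=
  Real.tendsto_tsum_powerSeries_nhdsWithin_lt ha.tendsto_sum_nat

lemma exists_pos_of_hasSum_one (ha : ∀ n, 0 ≤ a n) (ha1 : HasSum a 1) (ha0 : a 0 = 0) :
    ∃ k, 0 < a (k + 1) := by
  by_contra! h
  have hzero : a = 0 := funext fun n => by
    rcases n with _ | k
    · exact ha0
    · exact le_antisymm (h k) (ha _)
  rw [hzero] at ha1
  exact one_ne_zero (ha1.unique hasSum_zero)

lemma le_powSeries (ha : ∀ n, 0 ≤ a n) (hrad : OneLeRadius a) (hx0 : 0 ≤ x) (hx1 : x < 1)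
    (k : ℕ) : a k * x ^ k ≤ powSeries a x :=
  le_hasSum (hrad.hasSum (abs_lt.mpr ⟨by linarith, hx1⟩)) k
    fun j _ => mul_nonneg (ha j) (pow_nonneg hx0 j)

lemma powSeries_lt_one (ha : ∀ n, 0 ≤ a n) (ha1 : HasSum a 1) (ha0 : a 0 = 0)
    (hx0 : 0 ≤ x) (hx1 : x < 1) : powSeries a x < 1 := by
  obtain ⟨k, hk⟩ := exists_pos_of_hasSum_one ha ha1 ha0
  have hrad := oneLeRadius_of_nonneg_of_summable ha ha1.summable
  refine hasSum_lt (f := fun n => a n * x ^ n) (i := k + 1) (fun n => ?_) ?_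
    (hrad.hasSum (abs_lt.mpr ⟨by linarith, hx1⟩)) ha1
  · exact mul_le_of_le_one_right (ha n) (pow_le_one₀ hx0 hx1.le)
  · exact mul_lt_of_lt_one_right hk (pow_lt_one₀ hx0 hx1 k.succ_ne_zero)

lemma powSeries_pos (ha : ∀ n, 0 ≤ a n) (ha1 : HasSum a 1) (ha0 : a 0 = 0)
    (hx0 : 0 < x) (hx1 : x < 1) : 0 < powSeries a x := by
  obtain ⟨k, hk⟩ := exists_pos_of_hasSum_one ha ha1 ha0
  exact (mul_pos hk (pow_pos hx0 _)).trans_le <|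
    le_powSeries ha (oneLeRadius_of_nonneg_of_summable ha ha1.summable) hx0.le hx1 _

lemma one_sub_mul_powSeries_derivCoeff_le (ha : ∀ n, 0 ≤ a n) (ha1 : HasSum a 1)
    (hx0 : 0 ≤ x) (hx1 : x < 1) :
    (1 - x) * powSeries (derivCoeff a) x ≤ 1 - powSeries a x := by
  have hrad := oneLeRadius_of_nonneg_of_summable ha ha1.summable
  have hx : |x| < 1 := abs_lt.mpr ⟨by linarith, hx1⟩
  have hrhs : HasSum (fun n => a (n + 1) * (1 - x ^ (n + 1))) (1 - powSeries a x) := by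
    have h := (hasSum_nat_add_iff' 1).mpr (ha1.sub (hrad.hasSum hx))
    simp only [Finset.sum_range_one, pow_zero, mul_one, sub_self, sub_zero] at h
    exact h.congr_fun fun n => by ring
  refine hasSum_le (fun n => ?_) (((oneLeRadius_derivCoeff hrad).hasSum hx).mul_left _) hrhs
  rw [derivCoeff]
  nlinarith [succ_mul_pow_mul_one_sub_le hx0 hx1.le n, ha (n + 1)]

end ProbabilitySequence

noncomputable def negLogOneSub (f : ℝ → ℝ) (x : ℝ) : ℝ := -Real.log (1 - f x)

section NegLogOneSub

variable {f f' f'' : ℝ → ℝ} {x : ℝ}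

lemma negLogOneSub_pos (h0 : 0 < f x) (h1 : f x < 1) : 0 < negLogOneSub f x :=
  neg_pos.mpr (Real.log_neg (sub_pos.mpr h1) (sub_lt_self 1 h0))

lemma exp_neg_negLogOneSub (hx : f x < 1) : Real.exp (-negLogOneSub f x) = 1 - f x := by
  rw [negLogOneSub, neg_neg, Real.exp_log (sub_pos.mpr hx)]

lemma tendsto_negLogOneSub_atTop {l : Filter ℝ} (hf : Tendsto (fun y => 1 - f y) l (𝓝[>] 0)) :
    Tendsto (negLogOneSub f) l atTop :=
  tendsto_neg_atBot_atTop.comp (Real.tendsto_log_nhdsGT_zero.comp hf)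

lemma hasDerivAt_negLogOneSub {d : ℝ} (hf : HasDerivAt f d x) (hx : f x < 1) :
    HasDerivAt (negLogOneSub f) (d / (1 - f x)) x :=
  ((hf.const_sub 1).log (sub_pos.mpr hx).ne').neg.congr_deriv (by rw [neg_div, neg_neg])

lemma deriv_deriv_negLogOneSub {s : Set ℝ} (hs : IsOpen s) (hf : ∀ y ∈ s, HasDerivAt f (f' y) y)
    (hf' : ∀ y ∈ s, HasDerivAt f' (f'' y) y) (hlt : ∀ y ∈ s, f y < 1) (hx : x ∈ s) :
    deriv (deriv (negLogOneSub f)) x = (f' x / (1 - f x)) ^ 2 + f'' x / (1 - f x) := by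
  have hne : 1 - f x ≠ 0 := (sub_pos.mpr (hlt x hx)).ne'
  have heq : deriv (negLogOneSub f) =ᶠ[𝓝 x] fun y => f' y / (1 - f y) := by
    filter_upwards [hs.mem_nhds hx] with y hy
    exact (hasDerivAt_negLogOneSub (hf y hy) (hlt y hy)).deriv
  have hd : HasDerivAt (fun y => f' y / (1 - f y)) _ x :=
    (hf' x hx).div ((hf x hx).const_sub 1) hne
  rw [heq.deriv_eq, hd.deriv]
  field_simp
  ring

end NegLogOneSub

section GeneratingFunction

variable {a : ℕ → ℝ} {x : ℝ}

lemma tendsto_one_sub_powSeries (ha : ∀ n, 0 ≤ a n) (ha1 : HasSum a 1) (ha0 : a 0 = 0) :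
    Tendsto (fun y => 1 - powSeries a y) (𝓝[<] 1) (𝓝[>] 0) := by
  refine tendsto_nhdsWithin_iff.mpr
    ⟨by simpa using (tendsto_powSeries_nhdsLT_one ha1).const_sub 1, ?_⟩
  filter_upwards [Ico_mem_nhdsLT zero_lt_one] with y hy
  exact sub_pos.mpr (powSeries_lt_one ha ha1 ha0 hy.1 hy.2)

lemma deriv_negLogOneSub_powSeries (ha : ∀ n, 0 ≤ a n) (ha1 : HasSum a 1) (ha0 : a 0 = 0)
    (hx : x ∈ Ico 0 1) :
    deriv (negLogOneSub (powSeries a)) x = powSeries (derivCoeff a) x / (1 - powSeries a x) :=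
  (hasDerivAt_negLogOneSub (hasDerivAt_powSeries
    (oneLeRadius_of_nonneg_of_summable ha ha1.summable) (abs_lt.mpr ⟨by linarith [hx.1], hx.2⟩))
    (powSeries_lt_one ha ha1 ha0 hx.1 hx.2)).deriv

lemma deriv_negLogOneSub_powSeries_le (ha : ∀ n, 0 ≤ a n) (ha1 : HasSum a 1) (ha0 : a 0 = 0)
    (hx : x ∈ Ico 0 1) : deriv (negLogOneSub (powSeries a)) x ≤ 1 / (1 - x) := by
  rw [deriv_negLogOneSub_powSeries ha ha1 ha0 hx, div_le_div_iff₀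
    (sub_pos.mpr (powSeries_lt_one ha ha1 ha0 hx.1 hx.2)) (sub_pos.mpr hx.2)]
  linarith [one_sub_mul_powSeries_derivCoeff_le ha ha1 hx.1 hx.2]

lemma tendsto_deriv_negLogOneSub_powSeries (ha : ∀ n, 0 ≤ a n) (ha1 : HasSum a 1)
    (ha0 : a 0 = 0) : Tendsto (deriv (negLogOneSub (powSeries a))) (𝓝[<] 1) atTop := by
  obtain ⟨k, hk⟩ := exists_pos_of_hasSum_one ha ha1 ha0
  have hd : 0 < derivCoeff a k := mul_pos (by positivity) hk
  have hdrad := oneLeRadius_derivCoeff (oneLeRadius_of_nonneg_of_summable ha ha1.summable)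
  refine tendsto_atTop_mono' _ ?_ <| (tendsto_inv_nhdsGT_zero.comp
    (tendsto_one_sub_powSeries ha ha1 ha0)).const_mul_atTop (mul_pos hd (pow_pos one_half_pos k))
  filter_upwards [Ioo_mem_nhdsLT one_half_lt_one] with x hx
  have hx0 : 0 ≤ x := by linarith [hx.1]
  rw [Function.comp_apply, deriv_negLogOneSub_powSeries ha ha1 ha0 ⟨hx0, hx.2⟩, div_eq_mul_inv]
  refine mul_le_mul_of_nonneg_right ?_
    (inv_nonneg.mpr (sub_nonneg.mpr (powSeries_lt_one ha ha1 ha0 hx0 hx.2).le))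
  calc derivCoeff a k * (1 / 2) ^ k ≤ derivCoeff a k * x ^ k := by gcongr; exact hx.1.le
    _ ≤ powSeries (derivCoeff a) x :=
      le_powSeries (fun n => mul_nonneg (by positivity) (ha _)) hdrad hx0 hx.2 k

lemma deriv_deriv_negLogOneSub_powSeries {c : ℝ} (ha : ∀ n, 0 ≤ a n) (ha1 : HasSum a 1)
    (ha0 : a 0 = 0) (hcoef : ∀ k : ℕ, (k : ℝ) * (k + 1) * a (k + 1) - ((k : ℝ) - 1) * k * a k
      = 2 * c * (a k - cauchyProd a a k)) (hx : x ∈ Ioo 0 1) :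
    deriv (deriv (negLogOneSub (powSeries a))) x = deriv (negLogOneSub (powSeries a)) x ^ 2
      + 2 * c / (x * (1 - x)) * (1 - Real.exp (-negLogOneSub (powSeries a) x)) := by
  have hrad := oneLeRadius_of_nonneg_of_summable ha ha1.summable
  have habs (y : ℝ) (hy : y ∈ Ioo (0 : ℝ) 1) : |y| < 1 := abs_lt.mpr ⟨by linarith [hy.1], hy.2⟩
  have hlt (y : ℝ) (hy : y ∈ Ioo (0 : ℝ) 1) := powSeries_lt_one ha ha1 ha0 hy.1.le hy.2
  rw [deriv_deriv_negLogOneSub isOpen_Ioo (fun y hy => hasDerivAt_powSeries hrad (habs y hy))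
    (fun y hy => hasDerivAt_powSeries (oneLeRadius_derivCoeff hrad) (habs y hy)) hlt hx,
    deriv_negLogOneSub_powSeries ha ha1 ha0 (Ioo_subset_Ico_self hx),
    exp_neg_negLogOneSub (hlt x hx)]
  have hode := powSeries_ode_of_coeff_identity hrad hcoef (habs x hx)
  have hne : 1 - powSeries a x ≠ 0 := (sub_pos.mpr (hlt x hx)).ne'
  have hx0 : x ≠ 0 := hx.1.ne'
  have hx1 : 1 - x ≠ 0 := (sub_pos.mpr hx.2).ne'
  field_simp
  linear_combination (1 - powSeries a x) * hode

end GeneratingFunction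

/-- Properties of `g(x) = -log(1 - R(x))` where `R` is the probability
generating function of a fixed point `μ ∈ S₁` of `F_c`. -/
theorem g_properties (c : ℝ) (hc : 0 < c) (μ : ℕ∞ → ℝ) (hμ : MemS1 μ) (hfix : Fc c μ = μ)
    (R : ℝ → ℝ) (hR : R = fun x => ∑' i : ℕ, μ (i : ℕ∞) * x ^ i)
    (g : ℝ → ℝ) (hg : g = fun x => -Real.log (1 - R x)) :
    g 0 = 0 ∧
    (∀ x ∈ Set.Ioo (0 : ℝ) 1, 0 < g x ∧ R x < 1) ∧
    Tendsto g (𝓝[<] (1 : ℝ)) atTop ∧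
    (∀ x ∈ Set.Ioo (0 : ℝ) 1,
      deriv (deriv g) x = (deriv g x) ^ 2 + 2 * c / (x * (1 - x)) * (1 - Real.exp (-g x))) ∧
    Tendsto (deriv g) (𝓝[<] (1 : ℝ)) atTop ∧
    Tendsto (deriv (deriv g)) (𝓝[<] (1 : ℝ)) atTop ∧
    ∀ x ∈ Set.Ico (0 : ℝ) 1, deriv g x ≤ 1 / (1 - x) := by
  set a : ℕ → ℝ := fun n => μ n
  have ha (n : ℕ) : 0 ≤ a n := hμ.1.1 n
  have ha1 : HasSum a 1 := hμ.hasSum_natCast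
  have ha0 : a 0 = 0 := hμ.1.2.1
  obtain rfl : R = powSeries a := hR
  obtain rfl : g = negLogOneSub (powSeries a) := hg
  have hlt (x : ℝ) (hx : x ∈ Ioo (0 : ℝ) 1) := powSeries_lt_one ha ha1 ha0 hx.1.le hx.2
  have hode (x : ℝ) (hx : x ∈ Ioo (0 : ℝ) 1) :=
    deriv_deriv_negLogOneSub_powSeries ha ha1 ha0 (coeff_identity_of_Fc_eq hc hμ hfix) hx
  have hg' := tendsto_deriv_negLogOneSub_powSeries ha ha1 ha0
  refine ⟨by simp [negLogOneSub, powSeries_zero, ha0],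
    fun x hx => ⟨negLogOneSub_pos (powSeries_pos ha ha1 ha0 hx.1 hx.2) (hlt x hx), hlt x hx⟩,
    tendsto_negLogOneSub_atTop (tendsto_one_sub_powSeries ha ha1 ha0), hode, hg', ?_,
    fun x hx => deriv_negLogOneSub_powSeries_le ha ha1 ha0 hx⟩
  refine tendsto_atTop_mono' _ ?_ (hg'.atTop_mul_atTop₀ hg')
  filter_upwards [Ioo_mem_nhdsLT zero_lt_one] with x hx
  rw [hode x hx, exp_neg_negLogOneSub (hlt x hx), sub_sub_cancel, sq]
  have hx' : 0 < x * (1 - x) := mul_pos hx.1 (sub_pos.mpr hx.2)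
  have hR := (powSeries_pos ha ha1 ha0 hx.1 hx.2).le
  exact le_add_of_nonneg_right (by positivity)
end

section
/- For every c > 0, there exists a constant δ > 0 such that there is exactly one function h on [1-δ, 1) satisfying the ordinary differential equation h'(x) = (h(x))² + 2c/(1-x) together with the conditions 0 < h(x) < 1/(1-x) for all x ∈ [1-δ, 1) and lim_{x→1⁻} ∫_{1-δ}^{x} h(y) dy = ∞. -/
/-!
Writing `h = W / V` with `V' = -W` and `W' = q V` linearises the Riccati equation `h' = h² + q`.
For `q = 2c / (1 - x)` and `t = 1 - x` this is `t v'' + 2c v = 0`, whose solution with `v 0 = 0`,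
`v' 0 = 1` is an entire power series (a Bessel function). Near `t = 0` we have `v ≈ t` and
`v' ≈ 1`, so `h = v' / v` is positive, `∫ h = log v(δ) - log v(1 - x) → ∞`, and `h < 1 / t`
because `v - t v'` vanishes at `0` and has derivative `2c v > 0`.
For another solution `k`, `P = k V - W` solves `P' = k P`, hence `P = P(1 - δ) · exp (∫ k)`;
since `P` stays bounded while `∫ k → ∞`, `P ≡ 0`, that is `k = h`.
-/

open Filter Topology

section EntireSeries

variable {a : ℕ → ℝ}

theorem abs_natCast_mul_pow_pred_le {R y : ℝ} (hR : 1 ≤ R) (hy : |y| ≤ R) (n : ℕ) :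
    |n * y ^ (n - 1)| ≤ (2 * R) ^ n := by
  have hn : (n : ℝ) ≤ 2 ^ n := by exact_mod_cast Nat.lt_two_pow_self.le
  have hyn : |y| ^ (n - 1) ≤ R ^ n :=
    (pow_le_pow_left₀ (abs_nonneg y) hy _).trans (pow_le_pow_right₀ hR (n.sub_le 1))
  rw [abs_mul, abs_pow, Nat.abs_cast, mul_pow]
  exact mul_le_mul hn hyn (by positivity) (by positivity)

theorem summable_mul_pow (ha : ∀ r, Summable fun n => |a n| * r ^ n) (t : ℝ) :
    Summable fun n => a n * t ^ n :=
  (ha |t|).of_norm_bounded fun n => by rw [Real.norm_eq_abs, abs_mul, abs_pow]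

theorem summable_abs_succ_mul_mul_pow (ha : ∀ r, Summable fun n => |a n| * r ^ n) (r : ℝ) :
    Summable fun n => |(n + 1) * a (n + 1)| * r ^ n := by
  refine ((summable_nat_add_iff 1).2 (ha (2 * max 1 |r|))).of_norm_bounded fun n => ?_
  have key := abs_natCast_mul_pow_pred_le (le_max_left 1 |r|) (le_max_right 1 |r|) (n + 1)
  rw [Nat.add_sub_cancel, abs_mul, abs_pow, Nat.cast_succ] at key
  rw [Real.norm_eq_abs, abs_mul, abs_abs, abs_mul, abs_pow]
  calc |(n : ℝ) + 1| * |a (n + 1)| * |r| ^ n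
      = |a (n + 1)| * (|(n : ℝ) + 1| * |r| ^ n) := by ring
    _ ≤ |a (n + 1)| * (2 * max 1 |r|) ^ (n + 1) := by gcongr

theorem hasDerivAt_tsum_mul_pow (ha : ∀ r, Summable fun n => |a n| * r ^ n) (t : ℝ) :
    HasDerivAt (fun y => ∑' n, a n * y ^ n) (∑' n, (n + 1) * a (n + 1) * t ^ n) t := by
  set R := |t| + 1
  have hR : 1 ≤ R := by simp [R]
  have hbound : ∀ n, ∀ y ∈ Metric.ball (0 : ℝ) R,
      ‖a n * (n * y ^ (n - 1))‖ ≤ |a n| * (2 * R) ^ n :=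
    fun n y hy => by
      rw [Real.norm_eq_abs, abs_mul]
      gcongr
      exact abs_natCast_mul_pow_pred_le hR (by simpa using hy : |y| < R).le n
  have ht : t ∈ Metric.ball (0 : ℝ) R := by simp [R]
  have hderiv := hasDerivAt_tsum_of_isPreconnected (ha (2 * R)) Metric.isOpen_ball
    (convex_ball (0 : ℝ) R).isPreconnected
    (fun n y _ => (hasDerivAt_pow n y).const_mul (a n)) hbound (Metric.mem_ball_self (by linarith))
    (summable_mul_pow ha 0) ht
  refine hderiv.congr_deriv ?_
  rw [((ha (2 * R)).of_norm_bounded fun n => hbound n t ht).tsum_eq_zero_add]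
  simp only [Nat.cast_zero, zero_mul, mul_zero, zero_add, Nat.cast_succ, Nat.add_sub_cancel]
  exact tsum_congr fun n => by ring

end EntireSeries

section LinearODE

open Set Real

variable {P k : ℝ → ℝ} {a b : ℝ}

theorem mem_nhdsGE_of_mem_Ico {x : ℝ} (hx : x ∈ Ico a b) : Ico a b ∈ 𝓝[≥] x :=
  mem_of_superset (Ico_mem_nhdsGE hx.2) (Ico_subset_Ico_left hx.1)

theorem eq_mul_exp_integral_of_hasDerivWithinAt (hk : ContinuousOn k (Ico a b))
    (hP : ∀ x ∈ Ico a b, HasDerivWithinAt P (k x * P x) (Ico a b) x) {x : ℝ}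
    (hx : x ∈ Ico a b) :
    P x = P a * exp (∫ y in a..x, k y) := by
  set G := fun u => ∫ y in a..u, k y
  have hsub : Icc a x ⊆ Ico a b := Icc_subset_Ico_right hx.2
  have hG : ∀ y ∈ Ico a x, HasDerivWithinAt G (k y) (Ici y) y := fun y hy => by
    have hy' : y ∈ Ico a b := hsub (Ico_subset_Icc_self hy)
    have hmem : Ico a b ∈ 𝓝[>] y :=
      nhdsWithin_mono _ Ioi_subset_Ici_self (mem_nhdsGE_of_mem_Ico hy')
    exact intervalIntegral.integral_hasDerivWithinAt_right
      ((hk.mono (Icc_subset_Ico_right (hy.2.trans hx.2))).intervalIntegrable_of_Icc hy.1)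
      ((hk.stronglyMeasurableAtFilter_nhdsWithin measurableSet_Ico y).filter_mono
        (nhdsWithin_le_of_mem hmem))
      ((hk y hy').mono_of_mem_nhdsWithin hmem)
  have hGc : ContinuousOn G (Icc a x) := by
    simpa [uIcc_of_le hx.1] using intervalIntegral.continuousOn_primitive_interval'
      ((hk.mono hsub).intervalIntegrable_of_Icc hx.1) left_mem_uIcc
  have hconst := constant_of_has_deriv_right_zero (f := fun y => P y * exp (-G y))
    ((ContinuousOn.mono (fun y hy => (hP y hy).continuousWithinAt) hsub).mul
      (continuous_exp.comp_continuousOn hGc.neg))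
    (fun y hy => by
      have hy' : y ∈ Ico a b := hsub (Ico_subset_Icc_self hy)
      refine (((hP y hy').mono_of_mem_nhdsWithin (mem_nhdsGE_of_mem_Ico hy')).mul
        ((hG y hy).neg.exp)).congr_deriv ?_
      ring) x (right_mem_Icc.2 hx.1)
  simp only [G, intervalIntegral.integral_same, neg_zero, exp_zero, mul_one] at hconst
  rw [← hconst, mul_assoc, ← exp_add, neg_add_cancel, exp_zero, mul_one]

theorem eqOn_zero_of_hasDerivWithinAt_of_bounded (hk : ContinuousOn k (Ico a b))
    (hP : ∀ x ∈ Ico a b, HasDerivWithinAt P (k x * P x) (Ico a b) x)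
    (hbdd : ∃ M, ∀ x ∈ Ico a b, |P x| ≤ M)
    (hint : Tendsto (fun x => ∫ y in a..x, k y) (𝓝[<] b) atTop) : EqOn P 0 (Ico a b) := by
  intro x hx
  suffices hPa : P a = 0 by
    simp [eq_mul_exp_integral_of_hasDerivWithinAt hk hP hx, hPa]
  by_contra hPa
  obtain ⟨M, hM⟩ := hbdd
  have hgrow : Tendsto (fun x => |P a| * exp (∫ y in a..x, k y)) (𝓝[<] b) atTop :=
    (tendsto_exp_atTop.comp hint).const_mul_atTop (abs_pos.2 hPa)
  obtain ⟨y, hyM, hy⟩ :=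
    ((hgrow.eventually_gt_atTop M).and (Ioo_mem_nhdsLT (hx.1.trans_lt hx.2))).exists
  have hy' : y ∈ Ico a b := Ioo_subset_Ico_self hy
  have := hM y hy'
  rw [eq_mul_exp_integral_of_hasDerivWithinAt hk hP hy', abs_mul, abs_exp] at this
  linarith

end LinearODE

section Riccati

open Set Real

variable {V W q k : ℝ → ℝ} {a b : ℝ}

theorem hasDerivAt_div_sq_add {x : ℝ} (hV : HasDerivAt V (-W x) x)
    (hW : HasDerivAt W (q x * V x) x)
    (hVx : V x ≠ 0) : HasDerivAt (fun y => W y / V y) ((W x / V x) ^ 2 + q x) x :=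
  (hW.div hV hVx).congr_deriv (by field_simp; ring)

theorem integral_div_eq_log_sub_log {x : ℝ} (hax : a ≤ x)
    (hV : ∀ y ∈ Icc a x, HasDerivAt V (-W y) y) (hW : ContinuousOn W (Icc a x))
    (hpos : ∀ y ∈ Icc a x, 0 < V y) :
    ∫ y in a..x, W y / V y = log (V a) - log (V x) := by
  have := intervalIntegral.integral_eq_sub_of_hasDerivAt (f := fun y => -log (V y))
    (f' := fun y => W y / V y)
    (fun y hy => by
      rw [uIcc_of_le hax] at hy
      exact ((hV y hy).log (hpos y hy).ne').neg.congr_deriv (by field_simp))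
    (by
      refine ContinuousOn.intervalIntegrable ?_
      rw [uIcc_of_le hax]
      exact hW.div (fun y hy => (hV y hy).continuousAt.continuousWithinAt)
        fun y hy => (hpos y hy).ne')
  rw [this]
  ring

theorem tendsto_integral_div_atTop (hab : a < b) (hV : ∀ x ∈ Ico a b, HasDerivAt V (-W x) x)
    (hW : ContinuousOn W (Ico a b)) (hpos : ∀ x ∈ Ico a b, 0 < V x)
    (hV0 : Tendsto V (𝓝[<] b) (𝓝 0)) :
    Tendsto (fun x => ∫ y in a..x, W y / V y) (𝓝[<] b) atTop := by
  have hV0' : Tendsto V (𝓝[<] b) (𝓝[>] 0) :=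
    tendsto_nhdsWithin_iff.2 ⟨hV0, eventually_of_mem (Ioo_mem_nhdsLT hab) fun x hx =>
      hpos x (Ioo_subset_Ico_self hx)⟩
  refine (tendsto_atTop_add_const_left _ (log (V a))
    (tendsto_neg_atBot_atTop.comp (tendsto_log_nhdsGT_zero.comp hV0'))).congr' ?_
  filter_upwards [Ioo_mem_nhdsLT hab] with x hx
  have hsub : Icc a x ⊆ Ico a b := Icc_subset_Ico_right hx.2
  rw [integral_div_eq_log_sub_log hx.1.le (fun y hy => hV y (hsub hy)) (hW.mono hsub)
    fun y hy => hpos y (hsub hy)]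
  rfl

theorem eqOn_div_of_hasDerivWithinAt_sq_add (hV : ∀ x ∈ Ico a b, HasDerivAt V (-W x) x)
    (hW : ∀ x ∈ Ico a b, HasDerivAt W (q x * V x) x) (hV0 : ∀ x ∈ Ico a b, V x ≠ 0)
    (hk : ∀ x ∈ Ico a b, HasDerivWithinAt k (k x ^ 2 + q x) (Ico a b) x)
    (hbdd : ∃ M, ∀ x ∈ Ico a b, |k x * V x - W x| ≤ M)
    (hint : Tendsto (fun x => ∫ y in a..x, k y) (𝓝[<] b) atTop) :
    EqOn k (fun x => W x / V x) (Ico a b) := by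
  have hP := eqOn_zero_of_hasDerivWithinAt_of_bounded (P := fun x => k x * V x - W x)
    (fun x hx => (hk x hx).continuousWithinAt)
    (fun x hx => (((hk x hx).mul (hV x hx).hasDerivWithinAt).sub
      (hW x hx).hasDerivWithinAt).congr_deriv (by ring)) hbdd hint
  intro x hx
  rw [eq_div_iff (hV0 x hx), ← sub_eq_zero]
  exact hP hx

end Riccati

section Bessel

open Nat

/-- Coefficients of `besselV c t = √(t / 2c) · J₁(2√(2ct))`, the solution of
`t v'' + 2c v = 0` with `v 0 = 0` and `v' 0 = 1`. -/
noncomputable def besselCoeff (c : ℝ) : ℕ → ℝ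
  | 0 => 0
  | n + 1 => (-(2 * c)) ^ n / (n ! * (n + 1)!)

noncomputable def besselV (c t : ℝ) : ℝ := ∑' n, besselCoeff c n * t ^ n

noncomputable def besselW (c t : ℝ) : ℝ := ∑' n, (n + 1) * besselCoeff c (n + 1) * t ^ n

variable {c : ℝ}

theorem summable_abs_besselCoeff_mul_pow (c r : ℝ) :
    Summable fun n => |besselCoeff c n| * r ^ n := by
  refine (summable_nat_add_iff 1).1 <|
    ((Real.summable_pow_div_factorial (2 * |c| * |r|)).mul_left |r|).of_norm_bounded fun n => ?_
  have hfac : (n ! : ℝ) ≤ n ! * (n + 1)! :=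
    le_mul_of_one_le_right (by positivity) (by exact_mod_cast (n + 1).factorial_pos)
  simp only [besselCoeff, Real.norm_eq_abs, abs_mul, abs_abs, abs_pow, abs_div, abs_neg,
    Nat.abs_cast, mul_pow]
  rw [abs_of_pos (by norm_num : (0 : ℝ) < 2)]
  calc (2 ^ n * |c| ^ n / (n ! * (n + 1)!)) * |r| ^ (n + 1)
      = |r| * (2 ^ n * |c| ^ n * |r| ^ n) / (n ! * (n + 1)!) := by ring
    _ ≤ |r| * (2 ^ n * |c| ^ n * |r| ^ n / n !) := by rw [← mul_div_assoc]; gcongr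

theorem hasDerivAt_besselV (t : ℝ) : HasDerivAt (besselV c) (besselW c t) t :=
  hasDerivAt_tsum_mul_pow (summable_abs_besselCoeff_mul_pow c) t

theorem continuous_besselV : Continuous (besselV c) :=
  continuous_iff_continuousAt.2 fun t => (hasDerivAt_besselV t).continuousAt

theorem besselV_zero : besselV c 0 = 0 := by
  rw [besselV, tsum_eq_single 0 fun n hn => by simp [hn]]
  simp [besselCoeff]

theorem besselW_zero : besselW c 0 = 1 := by
  rw [besselW, tsum_eq_single 0 fun n hn => by simp [hn]]
  simp [besselCoeff]

theorem continuous_besselW : Continuous (besselW c) :=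
  continuous_iff_continuousAt.2 fun t =>
    (hasDerivAt_tsum_mul_pow (summable_abs_succ_mul_mul_pow (summable_abs_besselCoeff_mul_pow c))
      t).continuousAt

theorem hasDerivAt_besselW {t : ℝ} (ht : t ≠ 0) :
    HasDerivAt (besselW c) (-(2 * c) * besselV c t / t) t := by
  have hV := summable_mul_pow (summable_abs_besselCoeff_mul_pow c) t
  refine (hasDerivAt_tsum_mul_pow
    (summable_abs_succ_mul_mul_pow (summable_abs_besselCoeff_mul_pow c)) t).congr_deriv ?_
  rw [eq_div_iff ht, besselV, hV.tsum_eq_zero_add, ← tsum_mul_right]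
  simp only [besselCoeff, zero_mul, zero_add, ← tsum_mul_left]
  refine tsum_congr fun n => ?_
  simp only [Nat.factorial_succ, Nat.cast_mul, Nat.cast_succ]
  field_simp
  ring

end Bessel

section BesselNearZero

open Set

variable {c : ℝ}

theorem exists_forall_abs_besselW_sub_one_le (c : ℝ) {ε : ℝ} (hε : 0 < ε) :
    ∃ δ > 0, ∀ t ∈ Icc 0 δ, |besselW c t - 1| ≤ ε := by
  obtain ⟨δ, hδ, hball⟩ := Metric.continuousAt_iff.1 continuous_besselW.continuousAt ε hε
  refine ⟨δ / 2, half_pos hδ, fun t ht => ?_⟩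
  have hdist := @hball t (by rw [Real.dist_0_eq_abs, abs_of_nonneg ht.1]; linarith [ht.2])
  rw [Real.dist_eq, besselW_zero] at hdist
  exact hdist.le

theorem abs_besselV_sub_le {ε t : ℝ} (ht : 0 ≤ t)
    (hw : ∀ s ∈ Icc 0 t, |besselW c s - 1| ≤ ε) :
    |besselV c t - t| ≤ ε * t := by
  have hderiv : ∀ s ∈ Icc 0 t, HasDerivWithinAt (fun s => besselV c s - s) (besselW c s - 1)
      (Icc 0 t) s :=
    fun s _ => ((hasDerivAt_besselV s).sub (hasDerivAt_id s)).hasDerivWithinAt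
  simpa [besselV_zero, abs_of_nonneg ht] using
    (convex_Icc 0 t).norm_image_sub_le_of_norm_hasDerivWithin_le hderiv hw
      (left_mem_Icc.2 ht) (right_mem_Icc.2 ht)

theorem mul_besselW_lt_besselV (hc : 0 < c) {t : ℝ} (ht : 0 < t)
    (hv : ∀ s ∈ Ioo 0 t, 0 < besselV c s) : t * besselW c t < besselV c t := by
  have hderiv : ∀ s ∈ Ioo 0 t,
      HasDerivAt (fun s => besselV c s - s * besselW c s) (2 * c * besselV c s) s := fun s hs =>
    ((hasDerivAt_besselV s).sub
      ((hasDerivAt_id' s).mul (hasDerivAt_besselW hs.1.ne'))).congr_deriv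
        (by field_simp [hs.1.ne']; ring)
  have hmono : StrictMonoOn (fun s => besselV c s - s * besselW c s) (Icc 0 t) := by
    refine strictMonoOn_of_deriv_pos (convex_Icc 0 t) ?_ fun s hs => ?_
    · exact (continuous_besselV.sub (continuous_id.mul continuous_besselW)).continuousOn
    · rw [interior_Icc] at hs
      rw [(hderiv s hs).deriv]
      exact mul_pos (by positivity) (hv s hs)
  have := hmono (left_mem_Icc.2 ht.le) (right_mem_Icc.2 ht.le) ht
  simp only [besselV_zero, zero_mul, sub_zero] at this
  linarith

theorem besselV_pos {ε t : ℝ} (hε : ε < 1) (ht : 0 < t)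
    (hw : ∀ s ∈ Icc 0 t, |besselW c s - 1| ≤ ε) : 0 < besselV c t := by
  have := (abs_le.1 (abs_besselV_sub_le ht.le hw)).1
  nlinarith

theorem besselW_div_besselV_mem_Ioo (hc : 0 < c) {t : ℝ} (ht : 0 < t)
    (hw : ∀ s ∈ Icc 0 t, |besselW c s - 1| ≤ 1 / 2) :
    besselW c t / besselV c t ∈ Ioo 0 (1 / t) := by
  have hV := besselV_pos (by norm_num) ht hw
  have hlt := mul_besselW_lt_besselV hc ht fun s hs =>
    besselV_pos (by norm_num) hs.1 fun r hr => hw r ⟨hr.1, hr.2.trans hs.2.le⟩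
  refine ⟨div_pos (by linarith [(abs_le.1 (hw t ⟨ht.le, le_rfl⟩)).1]) hV, ?_⟩
  rw [div_lt_div_iff₀ hV ht]
  linarith

theorem abs_mul_besselV_sub_besselW_le {k t : ℝ} (ht : 0 < t)
    (hw : ∀ s ∈ Icc 0 t, |besselW c s - 1| ≤ 1 / 2) (hk : k ∈ Ioo 0 (1 / t)) :
    |k * besselV c t - besselW c t| ≤ 3 / 2 := by
  have hV := besselV_pos (by norm_num) ht hw
  have hkV : k * besselV c t < 3 / 2 :=
    calc k * besselV c t < 1 / t * besselV c t := mul_lt_mul_of_pos_right hk.2 hV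
      _ ≤ 3 / 2 := by
        rw [one_div_mul_eq_div, div_le_iff₀ ht]
        linarith [(abs_le.1 (abs_besselV_sub_le ht.le hw)).2]
  have hW := abs_le.1 (hw t ⟨ht.le, le_rfl⟩)
  rw [abs_le]
  constructor <;> nlinarith [mul_pos hk.1 hV]

end BesselNearZero

section BesselReflected

open Set

variable {c : ℝ}

theorem hasDerivAt_besselV_one_sub (x : ℝ) :
    HasDerivAt (fun y => besselV c (1 - y)) (-besselW c (1 - x)) x :=
  (hasDerivAt_besselV (1 - x)).comp_const_sub 1 x

theorem hasDerivAt_besselW_one_sub {x : ℝ} (hx : x ≠ 1) :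
    HasDerivAt (fun y => besselW c (1 - y)) (2 * c / (1 - x) * besselV c (1 - x)) x :=
  ((hasDerivAt_besselW (sub_ne_zero.2 hx.symm)).comp_const_sub 1 x).congr_deriv (by ring)

theorem tendsto_besselV_one_sub : Tendsto (fun x => besselV c (1 - x)) (𝓝[<] 1) (𝓝 0) := by
  have := ((continuous_besselV (c := c)).comp (continuous_sub_left 1)).tendsto 1
  simp only [Function.comp_def, sub_self, besselV_zero] at this
  exact this.mono_left nhdsWithin_le_nhds

end BesselReflected

/-- For every `c > 0` there exists `δ > 0` such that there is exactly one
function `h` on `[1-δ, 1)` satisfying `h'(x) = h(x)² + 2c/(1-x)`, `0 < h(x) < 1/(1-x)`,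
and `lim_{x→1⁻} ∫_{1-δ}^x h(y) dy = ∞`. -/
theorem lemma9_unique_ode (c : ℝ) (hc : 0 < c) :
    ∃ δ > (0 : ℝ), ∃ h : ℝ → ℝ,
      ((∀ x ∈ Set.Ico (1 - δ) 1,
          HasDerivWithinAt h ((h x) ^ 2 + 2 * c / (1 - x)) (Set.Ico (1 - δ) 1) x) ∧
        (∀ x ∈ Set.Ico (1 - δ) 1, 0 < h x ∧ h x < 1 / (1 - x)) ∧
        Tendsto (fun x => ∫ y in (1 - δ)..x, h y) (𝓝[<] (1 : ℝ)) atTop) ∧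
      ∀ h' : ℝ → ℝ,
        ((∀ x ∈ Set.Ico (1 - δ) 1,
            HasDerivWithinAt h' ((h' x) ^ 2 + 2 * c / (1 - x)) (Set.Ico (1 - δ) 1) x) ∧
          (∀ x ∈ Set.Ico (1 - δ) 1, 0 < h' x ∧ h' x < 1 / (1 - x)) ∧
          Tendsto (fun x => ∫ y in (1 - δ)..x, h' y) (𝓝[<] (1 : ℝ)) atTop) →
        Set.EqOn h' h (Set.Ico (1 - δ) 1) := by
  obtain ⟨δ, hδ, hw⟩ := exists_forall_abs_besselW_sub_one_le c one_half_pos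
  set V : ℝ → ℝ := fun x => besselV c (1 - x)
  set W : ℝ → ℝ := fun x => besselW c (1 - x)
  have hwin : ∀ x ∈ Set.Ico (1 - δ) 1,
      0 < 1 - x ∧ ∀ s ∈ Set.Icc 0 (1 - x), |besselW c s - 1| ≤ 1 / 2 :=
    fun x hx => ⟨by linarith [hx.2], fun s hs => hw s ⟨hs.1, by linarith [hs.2, hx.1]⟩⟩
  have hV : ∀ x ∈ Set.Ico (1 - δ) 1, 0 < V x :=
    fun x hx => besselV_pos (by norm_num) (hwin x hx).1 (hwin x hx).2
  have hV' : ∀ x, HasDerivAt V (-W x) x := hasDerivAt_besselV_one_sub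
  have hW' : ∀ x ∈ Set.Ico (1 - δ) 1, HasDerivAt W (2 * c / (1 - x) * V x) x :=
    fun x hx => hasDerivAt_besselW_one_sub hx.2.ne
  refine ⟨δ, hδ, fun x => W x / V x, ⟨fun x hx => ?_, fun x hx => ?_, ?_⟩,
    fun k ⟨hk, hkb, hki⟩ => ?_⟩
  · exact (hasDerivAt_div_sq_add (q := fun x => 2 * c / (1 - x)) (hV' x) (hW' x hx)
      (hV x hx).ne').hasDerivWithinAt
  · exact besselW_div_besselV_mem_Ioo hc (hwin x hx).1 (hwin x hx).2
  · exact tendsto_integral_div_atTop (by linarith) (fun x _ => hV' x)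
      (fun x hx => (hW' x hx).continuousAt.continuousWithinAt) hV tendsto_besselV_one_sub
  · exact eqOn_div_of_hasDerivWithinAt_sq_add (fun x _ => hV' x) hW' (fun x hx => (hV x hx).ne')
      hk ⟨3 / 2, fun x hx =>
        abs_mul_besselV_sub_besselW_le (hwin x hx).1 (hwin x hx).2 (hkb x hx)⟩ hki
end

section
/- Let c > 0 and let m ≤ s be positive integers. If E_m, E_{m+1}, ..., E_s are independent random variables with E_i exponentially distributed with rate ic, then for every u > 0, P(Σ_{i=m}^{s} E_i < u) = e^{-cmu} Σ_{i=s+1}^{∞} C(i-1, i-m) (1 - e^{-cu})^{i-m}, where C(i-1, i-m) denotes the binomial coefficient. -/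
/-!
For `t ≥ m` the partial sum `E_m + ⋯ + E_t` has density
`m C(t, m) c e^{-mcx} (1 - e^{-cx})^{t-m}` on `x ≥ 0`. For `t = m` this is the exponential
density, and convolving with the density `(t+1)c e^{-(t+1)cy}` of `E_{t+1}` amounts to integrating
the derivative of `e^{(k+1)cy} (1 - e^{-cy})^{k+1}`, where `k = t - m`.

With `q = e^{-cx}` the density equals `mc B_{t,m}(q)` for the Bernstein polynomial `B_{t,m}`.
Because `d/dq ∑_{ν<m} B_{s,ν} = -s B_{s-1,m-1}`, this gives
`P(E_m + ⋯ + E_s < u) = ∑_{ν<m} B_{s,ν}(e^{-cu})`, which is `P(Bin(s, q) < m)`. That is the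
probability that the `m`-th success of a Bernoulli(`q`) sequence comes after trial `s`, i.e. the
negative binomial tail on the right. We prove this identity by induction on `s`, and the base case
`s = m - 1` is the negative binomial series.
-/

open MeasureTheory ProbabilityTheory Real Set Polynomial
open scoped ENNReal

namespace bernsteinPolynomial

variable (R : Type*) [CommRing R]

theorem succ_zero (n : ℕ) :
    bernsteinPolynomial R (n + 1) 0 = (1 - X) * bernsteinPolynomial R n 0 := by
  simp [bernsteinPolynomial, pow_succ, mul_comm]

theorem succ_succ (n ν : ℕ) :
    bernsteinPolynomial R (n + 1) (ν + 1) =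
      (1 - X) * bernsteinPolynomial R n (ν + 1) + X * bernsteinPolynomial R n ν := by
  simp only [bernsteinPolynomial, Nat.choose_succ_succ', Nat.cast_add, Nat.add_sub_add_right]
  rcases lt_or_ge ν n with h | h
  · rw [show n - ν = n - (ν + 1) + 1 by omega]
    ring
  · rw [Nat.choose_eq_zero_of_lt (by omega : n < ν + 1)]
    ring

theorem sum_range_degree_succ (n k : ℕ) :
    ∑ ν ∈ Finset.range (k + 1), bernsteinPolynomial R (n + 1) ν =
      ∑ ν ∈ Finset.range (k + 1), bernsteinPolynomial R n ν -
        X * bernsteinPolynomial R n k := by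
  induction k with
  | zero => simp [succ_zero]; ring
  | succ k ih =>
    rw [Finset.sum_range_succ, ih, succ_succ,
      Finset.sum_range_succ (fun ν => bernsteinPolynomial R n ν) (k + 1)]
    ring

theorem derivative_sum_range (n k : ℕ) :
    derivative (∑ ν ∈ Finset.range (k + 1), bernsteinPolynomial R n ν) =
      -n * bernsteinPolynomial R (n - 1) k := by
  induction k with
  | zero => simp [derivative_zero]
  | succ k ih => rw [Finset.sum_range_succ, derivative_add, ih, derivative_succ]; ring

theorem add_one_mul_X_mul (n ν : ℕ) :
    ((n : R[X]) + 1) * X * bernsteinPolynomial R n ν =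
      ((ν : R[X]) + 1) * bernsteinPolynomial R (n + 1) (ν + 1) := by
  have h := congrArg (Nat.cast : ℕ → R[X]) (Nat.add_one_mul_choose_eq n ν)
  push_cast at h
  simp only [bernsteinPolynomial, Nat.add_sub_add_right]
  linear_combination (X ^ (ν + 1) * (1 - X) ^ (n - ν)) * h

end bernsteinPolynomial

theorem eval_sum_range_bernsteinPolynomial_eq_tsum {x : ℝ} (hx : ‖1 - x‖ < 1) {k n : ℕ}
    (hkn : k ≤ n) :
    (∑ ν ∈ Finset.range (k + 1), bernsteinPolynomial ℝ n ν).eval x =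
      x ^ (k + 1) * ∑' j, ((n + j).choose k : ℝ) * (1 - x) ^ (n + j - k) := by
  set a : ℕ → ℝ := fun i => (i.choose k : ℝ) * (1 - x) ^ (i - k)
  have ha : Summable a := by
    refine (summable_nat_add_iff k).1 ?_
    simpa [a] using summable_choose_mul_geometric_of_norm_lt_one k hx
  have hx0 : x ≠ 0 := by rintro rfl; simp at hx
  induction n, hkn using Nat.le_induction with
  | base =>
    have hgeom := tsum_choose_mul_geometric_of_norm_lt_one k hx
    simp only [sub_sub_cancel] at hgeom
    have hterm : ∀ j, ((k + j).choose k : ℝ) * (1 - x) ^ (k + j - k) =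
        ((j + k).choose k : ℝ) * (1 - x) ^ j := fun j => by rw [add_comm k, Nat.add_sub_cancel]
    rw [bernsteinPolynomial.sum, eval_one, tsum_congr hterm, hgeom]
    field_simp
  | succ n hkn ih =>
    have htail : ∑' j, a (n + j) = a n + ∑' j, a (n + 1 + j) := by
      have hs : Summable fun j => a (n + j) := by
        simpa only [add_comm] using (summable_nat_add_iff n).2 ha
      rw [hs.tsum_eq_zero_add]
      simp only [add_zero, ← add_assoc, add_right_comm n 1]
    rw [bernsteinPolynomial.sum_range_degree_succ, eval_sub, ih]
    change x ^ (k + 1) * ∑' j, a (n + j) - _ = x ^ (k + 1) * ∑' j, a (n + 1 + j)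
    rw [htail]
    simp only [a, bernsteinPolynomial, eval_mul, eval_X, eval_natCast, eval_pow, eval_sub,
      eval_one]
    ring

theorem setLIntegral_Icc_ofReal_eq_sub_of_hasDerivAt {f F : ℝ → ℝ} {a b : ℝ} (hab : a ≤ b)
    (hF : ∀ x ∈ Icc a b, HasDerivAt F (f x) x) (hf : ContinuousOn f (Icc a b))
    (hf0 : ∀ x ∈ Icc a b, 0 ≤ f x) :
    ∫⁻ x in Icc a b, ENNReal.ofReal (f x) = ENNReal.ofReal (F b - F a) := by
  rw [← ofReal_integral_eq_lintegral_ofReal hf.integrableOn_Icc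
      ((ae_restrict_iff' measurableSet_Icc).2 (ae_of_all _ hf0)),
    integral_Icc_eq_integral_Ioc, ← intervalIntegral.integral_of_le hab,
    intervalIntegral.integral_eq_sub_of_hasDerivAt (by rwa [uIcc_of_le hab])
      (hf.intervalIntegrable_of_Icc hab)]

noncomputable def expSumDensity (c : ℝ) (m t : ℕ) (x : ℝ) : ℝ :=
  m * t.choose m * c * exp (-(m * c * x)) * (1 - exp (-(c * x))) ^ (t - m)

noncomputable def expSumPDF (c : ℝ) (m t : ℕ) (x : ℝ) : ℝ≥0∞ :=
  ENNReal.ofReal ((Ici 0).indicator (expSumDensity c m t) x)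

noncomputable def expSumMeasure (c : ℝ) (m t : ℕ) : Measure ℝ :=
  volume.withDensity (expSumPDF c m t)

@[fun_prop]
theorem continuous_expSumDensity (c : ℝ) (m t : ℕ) : Continuous (expSumDensity c m t) := by
  unfold expSumDensity
  fun_prop

theorem expSumDensity_nonneg {c : ℝ} (hc : 0 ≤ c) (m t : ℕ) {x : ℝ} (hx : 0 ≤ x) :
    0 ≤ expSumDensity c m t x := by
  have : 0 ≤ 1 - exp (-(c * x)) := by
    simpa using exp_le_one_iff.2 (neg_nonpos.2 (mul_nonneg hc hx))
  unfold expSumDensity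
  positivity

theorem expSumPDF_of_neg {c : ℝ} {m t : ℕ} {x : ℝ} (hx : x < 0) : expSumPDF c m t x = 0 := by
  simp [expSumPDF, not_le.2 hx]

theorem expSumPDF_of_nonneg {c : ℝ} {m t : ℕ} {x : ℝ} (hx : 0 ≤ x) :
    expSumPDF c m t x = ENNReal.ofReal (expSumDensity c m t x) := by
  simp [expSumPDF, hx]

@[fun_prop]
theorem measurable_expSumPDF (c : ℝ) (m t : ℕ) : Measurable (expSumPDF c m t) :=
  ((continuous_expSumDensity c m t).measurable.indicator measurableSet_Ici).ennreal_ofReal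

theorem hasDerivAt_exp_mul_one_sub_exp_neg_pow (c : ℝ) (k : ℕ) (y : ℝ) :
    HasDerivAt (fun y => exp ((k + 1) * c * y) * (1 - exp (-(c * y))) ^ (k + 1))
      ((k + 1) * c * exp ((k + 1) * c * y) * (1 - exp (-(c * y))) ^ k) y := by
  have h1 := ((hasDerivAt_id y).const_mul ((k + 1) * c)).exp
  have h2 := (((hasDerivAt_id y).const_mul c).fun_neg.exp.const_sub 1).fun_pow (k + 1)
  refine (h1.mul h2).congr_deriv ?_
  simp only [id, Nat.add_sub_cancel]
  push_cast
  ring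

theorem expSumPDF_mul_exponentialPDF_eq_indicator {c : ℝ} (hc : 0 ≤ c) (m t : ℕ)
    (r z y : ℝ) :
    expSumPDF c m t y * exponentialPDF r (-y + z) =
      (Icc 0 z).indicator
        (fun y => ENNReal.ofReal (expSumDensity c m t y * (r * exp (-(r * (-y + z)))))) y := by
  by_cases hy : y ∈ Icc 0 z
  · rw [indicator_of_mem hy, expSumPDF_of_nonneg hy.1,
      exponentialPDF_of_nonneg (by linarith [hy.2]),
      ← ENNReal.ofReal_mul (expSumDensity_nonneg hc _ _ hy.1)]
  · rw [indicator_of_notMem hy]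
    rcases lt_or_ge y 0 with hy0 | hy0
    · rw [expSumPDF_of_neg hy0, zero_mul]
    · rw [exponentialPDF_of_neg (by linarith [not_and.1 hy hy0]), mul_zero]

theorem expSumDensity_add_mul (c z : ℝ) (m k : ℕ) :
    expSumDensity c m (m + k + 1) z * (k + 1) =
      m * (m + k).choose m * ((m + k + 1 : ℕ) * c) * exp (-((m + k + 1 : ℕ) * c * z)) *
        (exp ((k + 1) * c * z) * (1 - exp (-(c * z))) ^ (k + 1)) := by
  have hchoose : ((m + k).choose m : ℝ) * (m + k + 1) = (m + k + 1).choose m * (k + 1) := by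
    have := Nat.choose_mul_succ_eq (m + k) m
    rw [show m + k + 1 - m = k + 1 by omega] at this
    exact_mod_cast this
  have hexp : exp (-((m + k + 1 : ℕ) * c * z)) * exp ((k + 1) * c * z) = exp (-(m * c * z)) := by
    rw [← exp_add]
    push_cast
    ring_nf
  rw [expSumDensity, show m + k + 1 - m = k + 1 by omega]
  push_cast at hexp ⊢
  linear_combination -(m * c * (1 - exp (-(c * z))) ^ (k + 1)) *
    (exp (-((m + k + 1) * c * z)) * exp ((k + 1) * c * z) * hchoose +
      (m + k + 1).choose m * (k + 1) * hexp)

theorem expSumPDF_lconvolution_exponentialPDF {c : ℝ} (hc : 0 ≤ c) {m t : ℕ} (hmt : m ≤ t) :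
    expSumPDF c m t ⋆ₗ exponentialPDF ((t + 1 : ℕ) * c) = expSumPDF c m (t + 1) := by
  obtain ⟨k, rfl⟩ := Nat.exists_eq_add_of_le hmt
  set r : ℝ := ((m + k + 1 : ℕ) : ℝ) * c with hr
  ext z
  rw [lconvolution_def, lintegral_congr (expSumPDF_mul_exponentialPDF_eq_indicator hc _ _ r z),
    lintegral_indicator measurableSet_Icc]
  rcases lt_or_ge z 0 with hz | hz
  · simp [Icc_eq_empty_of_lt hz, expSumPDF_of_neg hz]
  have hexp : ∀ y, exp (-(m * c * y)) * exp (-(r * (-y + z))) =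
      exp (-(r * z)) * exp ((k + 1) * c * y) := fun y => by
    rw [← exp_add, ← exp_add, hr]
    push_cast
    ring_nf
  -- the integrand is `K` times the derivative of `e^{(k+1)cy} (1 - e^{-cy})^{k+1}`
  set K : ℝ := m * (m + k).choose m * r * exp (-(r * z)) / (k + 1)
  have hK : K * (k + 1) = m * (m + k).choose m * r * exp (-(r * z)) :=
    div_mul_cancel₀ _ (by positivity)
  have hderiv : ∀ y, HasDerivAt
      (fun y => K * (exp ((k + 1) * c * y) * (1 - exp (-(c * y))) ^ (k + 1)))
      (expSumDensity c m (m + k) y * (r * exp (-(r * (-y + z))))) y := by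
    intro y
    refine ((hasDerivAt_exp_mul_one_sub_exp_neg_pow c k y).const_mul K).congr_deriv ?_
    simp only [expSumDensity, Nat.add_sub_cancel_left]
    linear_combination (c * exp ((k + 1) * c * y) * (1 - exp (-(c * y))) ^ k) * hK +
      (m * (m + k).choose m * c * r * (1 - exp (-(c * y))) ^ k) * (hexp y).symm
  rw [setLIntegral_Icc_ofReal_eq_sub_of_hasDerivAt hz (fun y _ => hderiv y) (by fun_prop)
      (fun y hy => mul_nonneg (expSumDensity_nonneg hc _ _ hy.1) (by positivity)),
    expSumPDF_of_nonneg hz]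
  congr 1
  simp only [mul_zero, neg_zero, exp_zero, sub_self, zero_pow (Nat.succ_ne_zero k), sub_zero]
  refine mul_right_cancel₀ (show (k : ℝ) + 1 ≠ 0 by positivity) ?_
  linear_combination (exp ((k + 1) * c * z) * (1 - exp (-(c * z))) ^ (k + 1)) * hK -
    expSumDensity_add_mul c z m k

theorem expSumMeasure_self (c : ℝ) (m : ℕ) : expSumMeasure c m m = expMeasure (m * c) := by
  rw [expSumMeasure, expMeasure, gammaMeasure]
  congr 1
  ext x
  change _ = exponentialPDF _ x
  rcases lt_or_ge x 0 with hx | hx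
  · rw [expSumPDF_of_neg hx, exponentialPDF_of_neg hx]
  · rw [expSumPDF_of_nonneg hx, exponentialPDF_of_nonneg hx]
    simp [expSumDensity, mul_assoc]

theorem expSumMeasure_conv_expMeasure {c : ℝ} (hc : 0 ≤ c) {m t : ℕ} (hmt : m ≤ t) :
    expSumMeasure c m t ∗ expMeasure ((t + 1 : ℕ) * c) = expSumMeasure c m (t + 1) := by
  change volume.withDensity _ ∗ volume.withDensity (exponentialPDF _) = _
  rw [conv_withDensity_eq_lconvolution (g := exponentialPDF _) (by fun_prop)
      (measurable_exponentialPDFReal _).ennreal_ofReal,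
    expSumPDF_lconvolution_exponentialPDF hc hmt, expSumMeasure]

theorem hasDerivAt_eval_sum_range_bernsteinPolynomial_exp (c : ℝ) (k n : ℕ) (x : ℝ) :
    HasDerivAt (fun x =>
        (∑ ν ∈ Finset.range (k + 1), bernsteinPolynomial ℝ (n + 1) ν).eval (exp (-(c * x))))
      (expSumDensity c (k + 1) (n + 1) x) x := by
  have hq : HasDerivAt (fun x => exp (-(c * x))) (exp (-(c * x)) * -c) x :=
    ((hasDerivAt_id x).const_mul c).fun_neg.exp.congr_deriv (by simp)
  refine ((Polynomial.hasDerivAt _ _).comp x hq).congr_deriv ?_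
  have h := congrArg (eval (exp (-(c * x)))) (bernsteinPolynomial.add_one_mul_X_mul ℝ n k)
  simp only [eval_mul, eval_add, eval_natCast, eval_one, eval_X] at h
  rw [bernsteinPolynomial.derivative_sum_range, Nat.add_sub_cancel, eval_mul, eval_neg,
    eval_natCast, expSumDensity, show -((k + 1 : ℕ) * c * x) = (k + 1 : ℕ) * -(c * x) by ring,
    exp_nat_mul]
  simp only [bernsteinPolynomial, eval_mul, eval_natCast, eval_pow, eval_X, eval_sub,
    eval_one] at h ⊢
  push_cast at h ⊢
  linear_combination c * h

theorem expSumMeasure_Iio {c : ℝ} (hc : 0 ≤ c) {k n : ℕ} (hkn : k + 1 ≤ n) {u : ℝ}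
    (hu : 0 ≤ u) :
    expSumMeasure c (k + 1) n (Iio u) = ENNReal.ofReal
      ((∑ ν ∈ Finset.range (k + 1), bernsteinPolynomial ℝ n ν).eval (exp (-(c * u)))) := by
  obtain ⟨n, rfl⟩ : ∃ n', n = n' + 1 := ⟨n - 1, by omega⟩
  have hsplit : Iio u = Iio 0 ∪ Ico 0 u := (Iio_union_Ico_eq_Iio hu).symm
  rw [expSumMeasure, withDensity_apply _ measurableSet_Iio, hsplit,
    lintegral_union measurableSet_Ico (show Disjoint (Iio (0 : ℝ)) (Ico 0 u) from
      disjoint_left.2 fun _ hx hx' => not_le.2 hx hx'.1),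
    setLIntegral_congr_fun measurableSet_Iio (fun x hx => expSumPDF_of_neg hx), lintegral_zero,
    zero_add, setLIntegral_congr Ico_ae_eq_Icc,
    setLIntegral_congr_fun measurableSet_Icc (fun x hx => expSumPDF_of_nonneg hx.1),
    setLIntegral_Icc_ofReal_eq_sub_of_hasDerivAt hu
      (fun x _ => hasDerivAt_eval_sum_range_bernsteinPolynomial_exp c k n x) (by fun_prop)
      (fun x hx => expSumDensity_nonneg hc _ _ hx.1)]
  simp [eval_finsetSum, bernsteinPolynomial.eval_at_1, show ¬n < k by omega]

section

variable {Ω : Type*} [MeasurableSpace Ω] {P : Measure Ω}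

theorem ProbabilityTheory.iIndepFun.indepFun_finsetSum_of_subset {ι : Type*}
    {E : ι → Ω → ℝ} {S T : Finset ι} (h : iIndepFun (fun i : S => E i) P)
    (hmeas : ∀ i, Measurable (E i)) (hTS : T ⊆ S)
    {j : ι} (hjS : j ∈ S) (hjT : j ∉ T) :
    (∑ i ∈ T, E i) ⟂ᵢ[P] E j := by
  classical
  have := h.indepFun_finsetSum_of_notMem (fun i => hmeas i) (s := T.subtype (· ∈ S))
    (i := ⟨j, hjS⟩) (by simpa using hjT)
  rwa [Finset.sum_subtype_of_mem (fun i => E i) hTS] at this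

theorem hasLaw_sum_Icc_expSumMeasure [IsFiniteMeasure P] {c : ℝ} (hc : 0 ≤ c) {m s : ℕ}
    (hms : m ≤ s) {E : ℕ → Ω → ℝ}
    (hlaw : ∀ i ∈ Finset.Icc m s, HasLaw (E i) (expMeasure (i * c)) P)
    (hindep : ∀ t ∈ Finset.Ico m s, (∑ i ∈ Finset.Icc m t, E i) ⟂ᵢ[P] E (t + 1)) :
    HasLaw (∑ i ∈ Finset.Icc m s, E i) (expSumMeasure c m s) P := by
  induction s, hms using Nat.le_induction with
  | base => simpa [expSumMeasure_self] using hlaw m (by simp)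
  | succ t hmt ih =>
    have hX := ih (fun i hi => hlaw i (by simp at hi ⊢; omega))
      (fun i hi => hindep i (by simp at hi ⊢; omega))
    have hY := hlaw (t + 1) (by simp; omega)
    have := hX.isFiniteMeasure_iff.1 inferInstance
    have := hY.isFiniteMeasure_iff.1 inferInstance
    rw [Finset.sum_Icc_succ_top (by omega), ← expSumMeasure_conv_expMeasure hc hmt]
    exact (hindep t (by simp; omega)).hasLaw_add hX hY

end

/-- If `E_m, ..., E_s` are independent exponential random variables,
`E_i` with rate `ic`, then for every `u > 0`,
`P(Σ_{i=m}^s E_i < u) = e^{-cmu} Σ_{i=s+1}^∞ C(i-1, i-m) (1 - e^{-cu})^{i-m}`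
(the sum on the right being reindexed by `i = s + 1 + j`, `j ∈ ℕ`). -/
theorem exp_sum_cdf (c : ℝ) (hc : 0 < c) (m s : ℕ) (hm : 1 ≤ m) (hms : m ≤ s)
    {Ω : Type*} [MeasurableSpace Ω] (P : Measure Ω) [IsProbabilityMeasure P]
    (E : ℕ → Ω → ℝ) (hmeas : ∀ i, Measurable (E i))
    (hindep : iIndepFun
      (fun i : {i : ℕ // i ∈ Finset.Icc m s} => E i) P)
    (hdist : ∀ i ∈ Finset.Icc m s, Measure.map (E i) P = expMeasure ((i : ℝ) * c))
    (u : ℝ) (hu : 0 < u) :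
    (P {ω | (∑ i ∈ Finset.Icc m s, E i ω) < u}).toReal =
      Real.exp (-(c * m * u)) *
        ∑' j : ℕ, ((s + j).choose (s + 1 + j - m) : ℝ) *
          (1 - Real.exp (-(c * u))) ^ (s + 1 + j - m) := by
  obtain ⟨k, rfl⟩ : ∃ k, m = k + 1 := ⟨m - 1, by omega⟩
  have hlaw : HasLaw (∑ i ∈ Finset.Icc (k + 1) s, E i) (expSumMeasure c (k + 1) s) P :=
    hasLaw_sum_Icc_expSumMeasure hc.le hms (fun i hi => ⟨(hmeas i).aemeasurable, hdist i hi⟩)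
      fun t ht => by
        simp only [Finset.mem_Ico] at ht
        exact hindep.indepFun_finsetSum_of_subset hmeas (Finset.Icc_subset_Icc_right ht.2.le)
          (by simp; omega) (by simp)
  have hq1 : exp (-(c * u)) < 1 := exp_lt_one_iff.2 (neg_neg_of_pos (mul_pos hc hu))
  have hq : ‖1 - exp (-(c * u))‖ < 1 := by
    rw [Real.norm_eq_abs, abs_lt]
    constructor <;> linarith [exp_pos (-(c * u))]
  have hcdf := hlaw.measure_eq (p := (· < u)) measurableSet_Iio
  simp only [Finset.sum_apply] at hcdf
  rw [hcdf, show {x : ℝ | x < u} = Iio u from rfl, expSumMeasure_Iio hc.le hms hu.le,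
    eval_sum_range_bernsteinPolynomial_eq_tsum hq (by omega : k ≤ s), ENNReal.toReal_ofReal
      (mul_nonneg (by positivity) (tsum_nonneg fun j => by have := hq1.le; positivity)),
    ← exp_nat_mul, show (k + 1 : ℕ) * -(c * u) = -(c * (k + 1 : ℕ) * u) by ring]
  congr 1
  refine tsum_congr fun j => ?_
  rw [show s + 1 + j - (k + 1) = s + j - k by omega, Nat.choose_symm (by omega)]
end
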